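/- Let f, g : X → Y and f', g' : Y → Z be fibrewise maps over B with X normal. Then D_B(f' ∘ f, g' ∘ g) ≤ D_B(f, g) + D_B(f', g'). -/
import Mathlib


open scoped unitInterval

variable {B X Y Z X' Y' : Type*} [TopologicalSpace B] [TopologicalSpace X]
  [TopologicalSpace Y] [TopologicalSpace Z] [TopologicalSpace X'] [TopologicalSpace Y']

/-- `f` and `g` are fibrewise homotopic over `B` on the subset `U ⊆ X`:
there is a homotopy `H` from `f|U` to `g|U` each of whose stages is fibrewise. -/
def FibHomotopicOn (pX : X → B) (pY : Y → B) (f g : X → Y) (U : Set X) : Prop :=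
  ∃ H : C(U × unitInterval, Y),
    (∀ u : U, H (u, 0) = f u) ∧ (∀ u : U, H (u, 1) = g u) ∧
    (∀ (u : U) (t : unitInterval), pY (H (u, t)) = pX u)

/-- The parametrized (fibrewise) homotopic distance `D_B(f,g)`: the least `n`
such that `X` has an open cover by `n+1` sets on each of which `f` and `g` are
fibrewise homotopic (`∞` if there is no such cover). -/
noncomputable def fibDist (pX : X → B) (pY : Y → B) (f g : X → Y) : ℕ∞ :=
  sInf ((fun n : ℕ => (n : ℕ∞)) ''
    {n : ℕ | ∃ U : Fin (n + 1) → Set X,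
      (∀ i, IsOpen (U i)) ∧ (⋃ i, U i) = Set.univ ∧
      ∀ i, FibHomotopicOn pX pY f g (U i)})

open Set

set_option linter.unusedSectionVars false

section auxlemmas

variable {pX : X → B} {pY : Y → B} {pZ : Z → B}

lemma FibHomotopicOn.mono {f g : X → Y} {U W : Set X}
    (h : FibHomotopicOn pX pY f g U) (hWU : W ⊆ U) : FibHomotopicOn pX pY f g W := by
  obtain ⟨H, h0, h1, hp⟩ := h
  refine ⟨H.comp ⟨fun p => (Set.inclusion hWU p.1, p.2),
    ((continuous_inclusion hWU).comp continuous_fst).prodMk continuous_snd⟩, ?_, ?_, ?_⟩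
  · intro u; simpa using h0 (Set.inclusion hWU u)
  · intro u; simpa using h1 (Set.inclusion hWU u)
  · intro u t; simpa using hp (Set.inclusion hWU u) t

lemma FibHomotopicOn.postcomp {f g : X → Y} {U : Set X} {f' : Y → Z} (hf' : Continuous f')
    (hp' : ∀ y, pZ (f' y) = pY y) (h : FibHomotopicOn pX pY f g U) :
    FibHomotopicOn pX pZ (f' ∘ f) (f' ∘ g) U := by
  obtain ⟨H, h0, h1, hp⟩ := h
  refine ⟨⟨fun p => f' (H p), hf'.comp H.continuous⟩, ?_, ?_, ?_⟩
  · intro u; simp [h0 u]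
  · intro u; simp [h1 u]
  · intro u t; simp only [ContinuousMap.coe_mk, hp' _, hp u t]

lemma FibHomotopicOn.pullback {f' g' : Y → Z} {V : Set Y} {g : X → Y} (hg : Continuous g)
    (hgp : ∀ x, pY (g x) = pX x) (h : FibHomotopicOn pY pZ f' g' V) :
    FibHomotopicOn pX pZ (f' ∘ g) (g' ∘ g) (g ⁻¹' V) := by
  obtain ⟨H, h0, h1, hp⟩ := h
  refine ⟨H.comp ⟨fun p => (⟨g p.1, p.1.2⟩, p.2),
    (((hg.comp continuous_subtype_val).comp continuous_fst).subtype_mk _).prodMk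
      continuous_snd⟩, ?_, ?_, ?_⟩
  · intro u; simpa using h0 ⟨g u, u.2⟩
  · intro u; simpa using h1 ⟨g u, u.2⟩
  · intro u t; simpa [hgp] using hp ⟨g u, u.2⟩ t

lemma FibHomotopicOn.trans {f g h : X → Y} {U : Set X}
    (hfg : FibHomotopicOn pX pY f g U) (hgh : FibHomotopicOn pX pY g h U) :
    FibHomotopicOn pX pY f h U := by
  obtain ⟨H, H0, H1, Hp⟩ := hfg
  obtain ⟨K, K0, K1, Kp⟩ := hgh
  let F : C(U, Y) := H.comp ⟨fun u => (u, 0), continuous_id.prodMk continuous_const⟩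
  let G : C(U, Y) := K.comp ⟨fun u => (u, 0), continuous_id.prodMk continuous_const⟩
  let E : C(U, Y) := K.comp ⟨fun u => (u, 1), continuous_id.prodMk continuous_const⟩
  let A : ContinuousMap.Homotopy F G :=
    { toFun := fun p => H (p.2, p.1)
      continuous_toFun := H.continuous.comp (continuous_snd.prodMk continuous_fst)
      map_zero_left := fun u => rfl
      map_one_left := fun u => by
        show H (u, 1) = K (u, 0); rw [H1 u, K0 u] }
  let Bh : ContinuousMap.Homotopy G E :=
    { toFun := fun p => K (p.2, p.1)
      continuous_toFun := K.continuous.comp (continuous_snd.prodMk continuous_fst)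
      map_zero_left := fun u => rfl
      map_one_left := fun u => rfl }
  let L := A.trans Bh
  refine ⟨⟨fun p => L (p.2, p.1), L.continuous.comp (continuous_snd.prodMk continuous_fst)⟩,
    ?_, ?_, ?_⟩
  · intro u
    show L (0, u) = f u
    rw [L.apply_zero]
    exact H0 u
  · intro u
    show L (1, u) = h u
    rw [L.apply_one]
    exact K1 u
  · intro u t
    show pY (L (t, u)) = pX u
    rw [ContinuousMap.Homotopy.trans_apply]
    split_ifs
    · exact Hp u _
    · exact Kp u _

lemma FibHomotopicOn.iUnion {ι : Type*} {f g : X → Y} {C : ι → Set X}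
    (hop : ∀ a, IsOpen (C a)) (hdisj : Pairwise (Function.onFun Disjoint C))
    (h : ∀ a, FibHomotopicOn pX pY f g (C a)) :
    FibHomotopicOn pX pY f g (⋃ a, C a) := by
  choose H H0 H1 Hp using h
  set W : Set X := ⋃ a, C a with hW
  let S : ι → Set (W × unitInterval) := fun a => {p | (p.1 : X) ∈ C a}
  have hSop : ∀ a, IsOpen (S a) :=
    fun a => (hop a).preimage (continuous_subtype_val.comp continuous_fst)
  let φ : ∀ a, C(S a, Y) := fun a =>
    (H a).comp ⟨fun q => (⟨((q : W × unitInterval).1 : X), q.2⟩, (q : W × unitInterval).2),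
      ((continuous_subtype_val.comp (continuous_fst.comp continuous_subtype_val)).subtype_mk
        _).prodMk (continuous_snd.comp continuous_subtype_val)⟩
  have hφ : ∀ (a b) (p : W × unitInterval) (hpa : p ∈ S a) (hpb : p ∈ S b),
      φ a ⟨p, hpa⟩ = φ b ⟨p, hpb⟩ := by
    intro a b p hpa hpb
    rcases eq_or_ne a b with rfl | hab
    · rfl
    · exact absurd hpb (Set.disjoint_left.mp (hdisj hab) hpa)
  have hS : ∀ p : W × unitInterval, ∃ a, S a ∈ nhds p := by
    intro p
    obtain ⟨a, ha⟩ := Set.mem_iUnion.mp p.1.2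
    exact ⟨a, (hSop a).mem_nhds ha⟩
  refine ⟨ContinuousMap.liftCover S φ hφ hS, ?_, ?_, ?_⟩
  · intro u
    obtain ⟨a, ha⟩ := Set.mem_iUnion.mp u.2
    have : ((u, (0 : unitInterval)) : W × unitInterval) ∈ S a := ha
    rw [ContinuousMap.liftCover_coe (⟨(u, 0), this⟩ : S a)]
    exact H0 a ⟨u, ha⟩
  · intro u
    obtain ⟨a, ha⟩ := Set.mem_iUnion.mp u.2
    have : ((u, (1 : unitInterval)) : W × unitInterval) ∈ S a := ha
    rw [ContinuousMap.liftCover_coe (⟨(u, 1), this⟩ : S a)]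
    exact H1 a ⟨u, ha⟩
  · intro u t
    obtain ⟨a, ha⟩ := Set.mem_iUnion.mp u.2
    have : ((u, t) : W × unitInterval) ∈ S a := ha
    rw [ContinuousMap.liftCover_coe (⟨(u, t), this⟩ : S a)]
    exact Hp a ⟨u, ha⟩ t

lemma exists_bumps [NormalSpace X] {m : ℕ} {U : Fin m → Set X} (ho : ∀ i, IsOpen (U i))
    (hc : ⋃ i, U i = univ) :
    ∃ f : Fin m → C(X, ℝ), (∀ i x, f i x ∈ Icc (0:ℝ) 1) ∧ (∀ i x, f i x ≠ 0 → x ∈ U i) ∧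
      (∀ x, ∃ i, f i x = 1) := by
  obtain ⟨v, hvU, hvo, hvcl⟩ :=
    exists_iUnion_eq_closure_subset ho (fun x => Set.toFinite _) hc
  have key : ∀ i, ∃ fi : C(X,ℝ), EqOn fi 0 (U i)ᶜ ∧ EqOn fi 1 (closure (v i)) ∧
      ∀ x, fi x ∈ Icc (0:ℝ) 1 := by
    intro i
    exact exists_continuous_zero_one_of_isClosed (ho i).isClosed_compl isClosed_closure
      (Set.disjoint_left.mpr fun x hx hx2 => hx (hvcl i hx2))
  choose fi h0 h1 h01 using key
  refine ⟨fi, h01, fun i x hx => ?_, fun x => ?_⟩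
  · by_contra hxU
    exact hx (h0 i hxU)
  · obtain ⟨i, hi⟩ := Set.mem_iUnion.mp (hvU ▸ Set.mem_univ x)
    exact ⟨i, h1 i (subset_closure hi)⟩

end auxlemmas

section pieces

variable {m n : ℕ}

def pieceSet (f : Fin m → C(X,ℝ)) (g : Fin n → C(X,ℝ))
    (S : Finset (Fin m)) (T : Finset (Fin n)) : Set X :=
  {x | ∀ i ∈ S, ∀ j ∈ T, 0 < f i x * g j x ∧
    ∀ i' j', (i' ∉ S ∨ j' ∉ T) → f i' x * g j' x < f i x * g j x}

lemma pieceSet_isOpen (f : Fin m → C(X,ℝ)) (g : Fin n → C(X,ℝ))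
    (S : Finset (Fin m)) (T : Finset (Fin n)) : IsOpen (pieceSet f g S T) := by
  have : pieceSet f g S T = ⋂ i ∈ S, ⋂ j ∈ T,
      ({x | 0 < f i x * g j x} ∩ ⋂ i', ⋂ j',
        {x | (i' ∉ S ∨ j' ∉ T) → f i' x * g j' x < f i x * g j x}) := by
    ext x
    simp only [pieceSet, Set.mem_setOf_eq, Set.mem_iInter, Set.mem_inter_iff]
  rw [this]
  refine isOpen_biInter_finset fun i _ => isOpen_biInter_finset fun j _ => ?_
  refine IsOpen.inter (isOpen_lt continuous_const ((f i).continuous.mul (g j).continuous))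
    (isOpen_iInter_of_finite fun i' => isOpen_iInter_of_finite fun j' => ?_)
  by_cases hq : i' ∉ S ∨ j' ∉ T
  · simp only [hq, forall_true_left]
    exact isOpen_lt ((f i').continuous.mul (g j').continuous)
      ((f i).continuous.mul (g j).continuous)
  · simp only [hq]
    simp

lemma pieceSet_subset (f : Fin m → C(X,ℝ)) (g : Fin n → C(X,ℝ))
    {S : Finset (Fin m)} {T : Finset (Fin n)} {i : Fin m} {j : Fin n}
    {U : Fin m → Set X} {V : Fin n → Set X}
    (hi : i ∈ S) (hj : j ∈ T)
    (hfU : ∀ i x, f i x ≠ 0 → x ∈ U i) (hgV : ∀ j x, g j x ≠ 0 → x ∈ V j) :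
    pieceSet f g S T ⊆ U i ∩ V j := by
  intro x hx
  obtain ⟨hpos, -⟩ := hx i hi j hj
  constructor
  · exact hfU i x (fun h0 => by simp [h0] at hpos)
  · exact hgV j x (fun h0 => by simp [h0] at hpos)

lemma pieceSet_disjoint (f : Fin m → C(X,ℝ)) (g : Fin n → C(X,ℝ))
    {S S' : Finset (Fin m)} {T T' : Finset (Fin n)}
    (hS : S.Nonempty) (hT : T.Nonempty) (hS' : S'.Nonempty) (hT' : T'.Nonempty)
    (hcard : S.card + T.card = S'.card + T'.card) (hne : (S, T) ≠ (S', T')) :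
    Disjoint (pieceSet f g S T) (pieceSet f g S' T') := by
  rw [Set.disjoint_left]
  intro x hx hx'
  by_cases h1 : ∃ i ∈ S, ∃ j ∈ T, (i ∉ S' ∨ j ∉ T')
  · by_cases h2 : ∃ i ∈ S', ∃ j ∈ T', (i ∉ S ∨ j ∉ T)
    · obtain ⟨i, hi, j, hj, hout⟩ := h1
      obtain ⟨i', hi', j', hj', hout'⟩ := h2
      have l1 := (hx i hi j hj).2 i' j' hout'
      have l2 := (hx' i' hi' j' hj').2 i j hout
      linarith
    · push_neg at h2
      have hSsub : S' ⊆ S := fun i hi => (h2 i hi hT'.choose hT'.choose_spec).1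
      have hTsub : T' ⊆ T := fun j hj => (h2 hS'.choose hS'.choose_spec j hj).2
      have : S' = S := Finset.eq_of_subset_of_card_le hSsub (by
        have := Finset.card_le_card hTsub; omega)
      have : T' = T := Finset.eq_of_subset_of_card_le hTsub (by
        have := Finset.card_le_card hSsub; omega)
      apply hne
      ext1 <;> simp_all
  · push_neg at h1
    have hSsub : S ⊆ S' := fun i hi => (h1 i hi hT.choose hT.choose_spec).1
    have hTsub : T ⊆ T' := fun j hj => (h1 hS.choose hS.choose_spec j hj).2
    have e1 : S = S' := Finset.eq_of_subset_of_card_le hSsub (by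
      have := Finset.card_le_card hTsub; omega)
    have e2 : T = T' := Finset.eq_of_subset_of_card_le hTsub (by
      have := Finset.card_le_card hSsub; omega)
    exact hne (by rw [e1, e2])

lemma pieceSet_covers (f : Fin m → C(X,ℝ)) (g : Fin n → C(X,ℝ))
    (hf01 : ∀ i x, f i x ∈ Icc (0:ℝ) 1) (hg01 : ∀ j x, g j x ∈ Icc (0:ℝ) 1)
    (hf1 : ∀ x, ∃ i, f i x = 1) (hg1 : ∀ x, ∃ j, g j x = 1) (x : X) :
    ∃ S T, S.Nonempty ∧ T.Nonempty ∧ x ∈ pieceSet f g S T := by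
  classical
  refine ⟨Finset.univ.filter (fun i => f i x = 1), Finset.univ.filter (fun j => g j x = 1),
    ?_, ?_, ?_⟩
  · obtain ⟨i, hi⟩ := hf1 x; exact ⟨i, by simp [hi]⟩
  · obtain ⟨j, hj⟩ := hg1 x; exact ⟨j, by simp [hj]⟩
  · intro i hi j hj
    simp only [Finset.mem_filter, Finset.mem_univ, true_and] at hi hj
    rw [hi, hj]
    refine ⟨by norm_num, fun i' j' hout => ?_⟩
    rcases hout with hout | hout
    · simp only [Finset.mem_filter, Finset.mem_univ, true_and] at hout
      have h1 : f i' x < 1 := lt_of_le_of_ne (hf01 i' x).2 hout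
      have : f i' x * g j' x ≤ f i' x * 1 :=
        mul_le_mul_of_nonneg_left (hg01 j' x).2 (hf01 i' x).1
      nlinarith
    · simp only [Finset.mem_filter, Finset.mem_univ, true_and] at hout
      have h1 : g j' x < 1 := lt_of_le_of_ne (hg01 j' x).2 hout
      have : f i' x * g j' x ≤ 1 * g j' x :=
        mul_le_mul_of_nonneg_right (hf01 i' x).2 (hg01 j' x).1
      nlinarith

lemma cover_combine [NormalSpace X] {pX : X → B} {pZ : Z → B} {F G : X → Z}
    {U : Fin (m+1) → Set X} {V : Fin (n+1) → Set X}
    (hUo : ∀ i, IsOpen (U i)) (hUc : ⋃ i, U i = univ)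
    (hVo : ∀ j, IsOpen (V j)) (hVc : ⋃ j, V j = univ)
    (hUV : ∀ i j, FibHomotopicOn pX pZ F G (U i ∩ V j)) :
    ∃ W : Fin (m + n + 1) → Set X, (∀ k, IsOpen (W k)) ∧ (⋃ k, W k) = univ ∧
      ∀ k, FibHomotopicOn pX pZ F G (W k) := by
  obtain ⟨f, hf01, hfU, hf1⟩ := exists_bumps hUo hUc
  obtain ⟨g, hg01, hgV, hg1⟩ := exists_bumps hVo hVc
  let W : Fin (m+n+1) → Set X := fun k =>
    ⋃ (q : {q : Finset (Fin (m+1)) × Finset (Fin (n+1)) //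
        q.1.Nonempty ∧ q.2.Nonempty ∧ q.1.card + q.2.card = (k:ℕ) + 2}),
      pieceSet f g q.1.1 q.1.2
  refine ⟨W, ?_, ?_, ?_⟩
  · intro k; exact isOpen_iUnion fun q => pieceSet_isOpen f g _ _
  · rw [Set.iUnion_eq_univ_iff]
    intro x
    obtain ⟨S, T, hSne, hTne, hx⟩ := pieceSet_covers f g hf01 hg01 hf1 hg1 x
    have h1 : 1 ≤ S.card := hSne.card_pos
    have h2 : 1 ≤ T.card := hTne.card_pos
    have h3 : S.card ≤ m+1 := by simpa using Finset.card_le_univ S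
    have h4 : T.card ≤ n+1 := by simpa using Finset.card_le_univ T
    refine ⟨⟨S.card + T.card - 2, by omega⟩, ?_⟩
    exact Set.mem_iUnion.mpr ⟨⟨(S,T), hSne, hTne, by simp; omega⟩, hx⟩
  · intro k
    apply FibHomotopicOn.iUnion
    · intro q; exact pieceSet_isOpen f g _ _
    · intro a b hab
      refine pieceSet_disjoint f g a.2.1 a.2.2.1 b.2.1 b.2.2.1 ?_ ?_
      · rw [a.2.2.2, b.2.2.2]
      · rw [Prod.mk.eta, Prod.mk.eta]
        exact fun h => hab (Subtype.ext h)
    · intro q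
      obtain ⟨i, hi⟩ := q.2.1
      obtain ⟨j, hj⟩ := q.2.2.1
      exact (hUV i j).mono (pieceSet_subset f g hi hj hfU hgV)

end pieces

lemma sInf_image_natCast_eq {s : Set ℕ} (hs : s.Nonempty) :
    sInf ((fun n : ℕ => (n : ℕ∞)) '' s) = ((sInf s : ℕ) : ℕ∞) := by
  apply le_antisymm
  · exact sInf_le ⟨sInf s, Nat.sInf_mem hs, rfl⟩
  · refine le_sInf ?_
    rintro _ ⟨k, hk, rfl⟩
    simp only []
    exact_mod_cast Nat.sInf_le hk

theorem fibDist_comp_triangle [NormalSpace X] (pX : X → B) (pY : Y → B) (pZ : Z → B)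
    (f g : X → Y) (f' g' : Y → Z)
    (hf : Continuous f) (hg : Continuous g) (hf' : Continuous f') (hg' : Continuous g')
    (hfp : ∀ x, pY (f x) = pX x) (hgp : ∀ x, pY (g x) = pX x)
    (hfp' : ∀ y, pZ (f' y) = pY y) (hgp' : ∀ y, pZ (g' y) = pY y) :
    fibDist pX pZ (f' ∘ f) (g' ∘ g) ≤ fibDist pX pY f g + fibDist pY pZ f' g' := by
  classical
  rcases eq_or_ne (fibDist pX pY f g) ⊤ with h | h
  · rw [h, top_add]; exact le_top
  rcases eq_or_ne (fibDist pY pZ f' g') ⊤ with h' | h'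
  · rw [h', add_top]; exact le_top
  set sA := {n : ℕ | ∃ U : Fin (n + 1) → Set X,
      (∀ i, IsOpen (U i)) ∧ (⋃ i, U i) = Set.univ ∧
      ∀ i, FibHomotopicOn pX pY f g (U i)} with hsA
  set sB := {n : ℕ | ∃ U : Fin (n + 1) → Set Y,
      (∀ i, IsOpen (U i)) ∧ (⋃ i, U i) = Set.univ ∧
      ∀ i, FibHomotopicOn pY pZ f' g' (U i)} with hsB
  have hAne : sA.Nonempty := by
    by_contra hA
    rw [Set.not_nonempty_iff_eq_empty] at hA
    apply h
    rw [fibDist, ← hsA, hA, Set.image_empty, sInf_empty]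
  have hBne : sB.Nonempty := by
    by_contra hB
    rw [Set.not_nonempty_iff_eq_empty] at hB
    apply h'
    rw [fibDist, ← hsB, hB, Set.image_empty, sInf_empty]
  have hmA : sInf sA ∈ sA := Nat.sInf_mem hAne
  have hmB : sInf sB ∈ sB := Nat.sInf_mem hBne
  set m := sInf sA
  set n := sInf sB
  have eA : fibDist pX pY f g = (m : ℕ∞) := by
    rw [fibDist, ← hsA]; exact sInf_image_natCast_eq hAne
  have eB : fibDist pY pZ f' g' = (n : ℕ∞) := by
    rw [fibDist, ← hsB]; exact sInf_image_natCast_eq hBne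
  rw [eA, eB, ← Nat.cast_add]
  obtain ⟨Uc, hUo, hUc, hU⟩ := hmA
  obtain ⟨Vc, hVo, hVc, hV⟩ := hmB
  have hV'o : ∀ j, IsOpen (g ⁻¹' Vc j) := fun j => (hVo j).preimage hg
  have hV'c : ⋃ j, g ⁻¹' Vc j = Set.univ := by
    rw [← Set.preimage_iUnion, hVc, Set.preimage_univ]
  have hUV : ∀ i j, FibHomotopicOn pX pZ (f' ∘ f) (g' ∘ g) (Uc i ∩ g ⁻¹' Vc j) := by
    intro i j
    exact (((hU i).postcomp hf' hfp').mono Set.inter_subset_left).trans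
      (((hV j).pullback hg hgp).mono Set.inter_subset_right)
  obtain ⟨W, hWo, hWc, hW⟩ := cover_combine hUo hUc hV'o hV'c hUV
  exact sInf_le ⟨m + n, ⟨W, hWo, hWc, hW⟩, rfl⟩
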